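/- arXiv:2501.15647 — 2 statements merged into one kernel-verified Lean document; each statement's English description precedes it below -/
import Mathlib

section
/- Let X be a regular G-complex, ℓ a lift, and ψ', ω' simplices of X/G with ω' ⊆ ψ' and dim ψ' = dim ω' + 1. Then the set T*(ψ', ω') = {g ∈ G : g·ℓ(ω') ⊆ ℓ(ψ')} is nonempty and is a left coset of the isotropy subgroup G_{ℓ(ω')} in G. -/
open Pointwise

/-- A finite simplicial complex equipped with a simplicial action of a group `G`. -/
structure GComplex (G V : Type*) [Group G] [MulAction G V] [DecidableEq V] where
  simplices : Finset (Finset V)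
  nonempty_of_mem : ∀ s ∈ simplices, s.Nonempty
  down_closed : ∀ s ∈ simplices, ∀ t ⊆ s, t.Nonempty → t ∈ simplices
  smul_mem : ∀ (g : G), ∀ s ∈ simplices, g • s ∈ simplices

/-- Bredon's regularity condition. -/
def GComplex.Regular {G V : Type*} [Group G] [MulAction G V] [DecidableEq V]
    (X : GComplex G V) : Prop :=
  ∀ (H : Subgroup G) (d : ℕ) (v : Fin (d + 1) → V) (h : Fin (d + 1) → G),
    (∀ i, h i ∈ H) →
    Finset.image v Finset.univ ∈ X.simplices →
    Finset.image (fun i => h i • v i) Finset.univ ∈ X.simplices →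
    ∃ g ∈ H, ∀ i, g • v i = h i • v i



lemma injOn_quot {G V : Type*} [Group G] [MulAction G V] [DecidableEq V]
    (X : GComplex G V) (hreg : X.Regular) {σ : Finset V} (hσ : σ ∈ X.simplices) :
    Set.InjOn (Quotient.mk (MulAction.orbitRel G V)) σ := by
  intro v hv w hw hvw
  have hrel : v ∈ MulAction.orbit G w := Quotient.exact hvw
  obtain ⟨g, hg⟩ := hrel
  have h1 : Finset.image (![w, w]) Finset.univ ∈ X.simplices := by
    apply X.down_closed σ hσ
    · intro x hx
      simp only [Finset.mem_image] at hx
      obtain ⟨i, _, rfl⟩ := hx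
      fin_cases i <;> simpa
    · exact ⟨w, by simp [Fin.exists_fin_two]⟩
  have h2 : Finset.image (fun i => (![1, g] : Fin 2 → G) i • (![w, w] : Fin 2 → V) i)
      Finset.univ ∈ X.simplices := by
    apply X.down_closed σ hσ
    · intro x hx
      simp only [Finset.mem_image] at hx
      obtain ⟨i, _, rfl⟩ := hx
      fin_cases i <;> simp [show g • w = v from hg]
      · exact hw
      · exact hv
    · exact ⟨w, by simp [Fin.exists_fin_two]⟩
  obtain ⟨g', -, hg'⟩ := hreg ⊤ 1 ![w, w] ![1, g] (fun _ => trivial) h1 h2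
  have e0 := hg' 0
  have e1 := hg' 1
  simp at e0 e1
  have hg2 : g • w = v := hg
  rw [← hg2, ← e1]; exact e0

lemma exists_smul_eq_aux {G V : Type*} [Group G] [MulAction G V] [DecidableEq V]
    [DecidableEq (Quotient (MulAction.orbitRel G V))]
    (X : GComplex G V) (hreg : X.Regular) {σ τ : Finset V}
    (hσ : σ ∈ X.simplices) (hτ : τ ∈ X.simplices)
    (him : σ.image (Quotient.mk (MulAction.orbitRel G V)) =
      τ.image (Quotient.mk (MulAction.orbitRel G V))) :
    ∃ g : G, g • σ = τ := by
  obtain ⟨d, hd⟩ : ∃ d, σ.card = d + 1 :=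
    ⟨σ.card - 1, (Nat.succ_pred_eq_of_pos (Finset.card_pos.mpr (X.nonempty_of_mem σ hσ))).symm⟩
  let e : Fin (d + 1) ≃ σ := (finCongr hd.symm).trans σ.equivFin.symm
  set v : Fin (d + 1) → V := fun i => (e i : V) with hv
  have hvimg : Finset.image v Finset.univ = σ := by
    ext x
    simp only [Finset.mem_image, Finset.mem_univ, true_and]
    constructor
    · rintro ⟨i, rfl⟩; exact (e i).2
    · intro hx; exact ⟨e.symm ⟨x, hx⟩, by simp [hv]⟩
  have hex : ∀ i, ∃ h : G, h • v i ∈ τ := by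
    intro i
    have h1 : Quotient.mk (MulAction.orbitRel G V) (v i) ∈
        τ.image (Quotient.mk (MulAction.orbitRel G V)) :=
      him ▸ Finset.mem_image_of_mem _ (e i).2
    obtain ⟨w, hw, hqw⟩ := Finset.mem_image.mp h1
    obtain ⟨h, hh⟩ : v i ∈ MulAction.orbit G w := Quotient.exact hqw.symm
    have hh' : h • w = v i := hh
    exact ⟨h⁻¹, by rw [← hh', inv_smul_smul]; exact hw⟩
  choose h hh using hex
  have himg2 : Finset.image (fun i => h i • v i) Finset.univ = τ := by
    apply Finset.Subset.antisymm
    · intro x hx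
      obtain ⟨i, -, rfl⟩ := Finset.mem_image.mp hx
      exact hh i
    · intro w hw
      have h1 : Quotient.mk (MulAction.orbitRel G V) w ∈
          σ.image (Quotient.mk (MulAction.orbitRel G V)) :=
        him.symm ▸ Finset.mem_image_of_mem _ hw
      obtain ⟨x, hx, hqx⟩ := Finset.mem_image.mp h1
      obtain ⟨i, rfl⟩ : ∃ i, v i = x := by
        have := hvimg ▸ hx
        simpa using Finset.mem_image.mp this
      have hq2 : Quotient.mk (MulAction.orbitRel G V) (h i • v i) =
          Quotient.mk (MulAction.orbitRel G V) w := by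
        rw [← hqx]; exact Quotient.sound ⟨h i, rfl⟩
      have := injOn_quot X hreg hτ (hh i) hw hq2
      rw [← this]
      exact Finset.mem_image.mpr ⟨i, Finset.mem_univ i, rfl⟩
  obtain ⟨g, -, hg⟩ := hreg ⊤ d v h (fun _ => trivial) (hvimg ▸ hσ) (himg2 ▸ hτ)
  refine ⟨g, ?_⟩
  rw [← hvimg, ← himg2, Finset.smul_finset_def, Finset.image_image]
  exact Finset.image_congr (fun i _ => hg i)

/-- For simplices `ω' ⊆ ψ'` of the quotient with `dim ψ' = dim ω' + 1`, the extended
transfer set `T*(ψ', ω') = {g : g • ℓ(ω') ⊆ ℓ(ψ')}` is nonempty and is a left coset of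
the isotropy subgroup of `ℓ(ω')`. -/
theorem stmt_7 {G V : Type*} [Group G] [MulAction G V] [DecidableEq V]
    [DecidableEq (Quotient (MulAction.orbitRel G V))]
    (X : GComplex G V) (hreg : X.Regular)
    (ℓ : Finset (Quotient (MulAction.orbitRel G V)) → Finset V)
    (hℓ : ∀ t ∈ X.simplices.image (fun s => s.image (Quotient.mk (MulAction.orbitRel G V))),
      ℓ t ∈ X.simplices ∧ (ℓ t).image (Quotient.mk (MulAction.orbitRel G V)) = t)
    (ψ' ω' : Finset (Quotient (MulAction.orbitRel G V)))
    (hψ' : ψ' ∈ X.simplices.image (fun s => s.image (Quotient.mk (MulAction.orbitRel G V))))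
    (hω' : ω' ∈ X.simplices.image (fun s => s.image (Quotient.mk (MulAction.orbitRel G V))))
    (hsub : ω' ⊆ ψ') (hdim : ψ'.card = ω'.card + 1) :
    {g : G | g • ℓ ω' ⊆ ℓ ψ'}.Nonempty ∧
    ∃ g₀ : G, {g : G | g • ℓ ω' ⊆ ℓ ψ'} =
      g₀ • (MulAction.stabilizer G (ℓ ω') : Set G) := by
  obtain ⟨hLψ, hLψim⟩ := hℓ ψ' hψ'
  obtain ⟨hLω, hLωim⟩ := hℓ ω' hω'
  set q := Quotient.mk (MulAction.orbitRel G V) with hq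
  set ω'' := (ℓ ψ').filter (fun v => q v ∈ ω') with hω''def
  have hsub2 : ω'' ⊆ ℓ ψ' := Finset.filter_subset _ _
  have him2 : ω''.image q = ω' := by
    apply Finset.Subset.antisymm
    · intro x hx
      obtain ⟨y, hy, rfl⟩ := Finset.mem_image.mp hx
      exact (Finset.mem_filter.mp hy).2
    · intro x hx
      have h1 : x ∈ (ℓ ψ').image q := by rw [hLψim]; exact hsub hx
      obtain ⟨y, hy, rfl⟩ := Finset.mem_image.mp h1
      exact Finset.mem_image_of_mem _ (Finset.mem_filter.mpr ⟨hy, hx⟩)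
  have hω''ne : ω''.Nonempty := by
    have h1 : ω'.Nonempty := by rw [← hLωim]; exact (X.nonempty_of_mem _ hLω).image q
    obtain ⟨x, hx⟩ := h1
    obtain ⟨y, hy, -⟩ := Finset.mem_image.mp (show x ∈ ω''.image q by rw [him2]; exact hx)
    exact ⟨y, hy⟩
  have hω''mem : ω'' ∈ X.simplices := X.down_closed _ hLψ _ hsub2 hω''ne
  obtain ⟨g₀, hg₀⟩ := exists_smul_eq_aux X hreg hLω hω''mem (hLωim.trans him2.symm)
  have key : {g : G | g • ℓ ω' ⊆ ℓ ψ'} = {g : G | g • ℓ ω' = ω''} := by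
    ext g
    simp only [Set.mem_setOf_eq]
    constructor
    · intro hs
      have hsub3 : g • ℓ ω' ⊆ ω'' := by
        intro x hx
        obtain ⟨y, hy, rfl⟩ := Finset.mem_smul_finset.mp hx
        refine Finset.mem_filter.mpr ⟨hs hx, ?_⟩
        have hqy : q (g • y) = q y := Quotient.sound ⟨g, rfl⟩
        rw [hqy]
        rw [← hLωim]; exact Finset.mem_image_of_mem q hy
      apply Finset.eq_of_subset_of_card_le hsub3
      have c1 : (g • ℓ ω').card = (ℓ ω').card := Finset.card_smul_finset g _
      have c2 : (ℓ ω').card = ω'.card := by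
        conv_rhs => rw [← hLωim]
        exact (Finset.card_image_of_injOn (injOn_quot X hreg hLω)).symm
      have c3 : ω''.card = ω'.card := by
        conv_rhs => rw [← him2]
        exact (Finset.card_image_of_injOn (injOn_quot X hreg hω''mem)).symm
      rw [c1, c2, c3]
    · intro hs
      rw [hs]
      exact hsub2
  constructor
  · exact ⟨g₀, by simp only [Set.mem_setOf_eq, hg₀]; exact hsub2⟩
  · refine ⟨g₀, ?_⟩
    rw [key]
    ext g
    simp only [Set.mem_setOf_eq, Set.mem_smul_set_iff_inv_smul_mem, SetLike.mem_coe,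
      MulAction.mem_stabilizer_iff, smul_eq_mul, mul_smul, inv_smul_eq_iff, hg₀]
end

section
/- Let X be a regular G-complex, ℓ a lift, and ψ', ω' simplices of X/G with ω' ⊆ ψ'. Let ω be the unique face of ℓ(ψ') with π(ω) = ω'. Then {g ∈ G : g·ℓ(ω') = ω} = {g ∈ G : g·ℓ(ω') ⊆ ℓ(ψ')}; and if ω' ⊄ ψ' then {g ∈ G : g·ℓ(ω') ⊆ ℓ(ψ')} is empty. -/
open Pointwise

/-- The quotient map is injective on each simplex of a regular complex. -/
lemma quot_inj_on_simplex {G V : Type*} [Group G] [MulAction G V] [DecidableEq V]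
    (X : GComplex G V) (hreg : X.Regular) {s : Finset V} (hs : s ∈ X.simplices)
    {v w : V} (hv : v ∈ s) (hw : w ∈ s)
    (hq : Quotient.mk (MulAction.orbitRel G V) v = Quotient.mk (MulAction.orbitRel G V) w) :
    v = w := by
  by_contra hne
  obtain ⟨g, hg⟩ : v ∈ MulAction.orbit G w := Quotient.exact hq
  obtain ⟨d, hd⟩ : ∃ d, s.card = d + 1 :=
    ⟨s.card - 1, (Nat.succ_pred_eq_of_pos (Finset.card_pos.2 ⟨v, hv⟩)).symm⟩
  let e : s ≃ Fin (d + 1) := s.equivFin.trans (finCongr hd)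
  let f : Fin (d + 1) → V := fun i => (e.symm i : V)
  have hf : Finset.image f Finset.univ = s := by
    ext x
    simp only [Finset.mem_image, Finset.mem_univ, true_and]
    constructor
    · rintro ⟨i, rfl⟩; exact (e.symm i).2
    · intro hx; exact ⟨e ⟨x, hx⟩, by simp [f]⟩
  let j : Fin (d + 1) := e ⟨w, hw⟩
  let h : Fin (d + 1) → G := fun i => if i = j then g else 1
  have hfj : f j = w := by simp [f, j]
  have hsub : Finset.image (fun i => h i • f i) Finset.univ ⊆ s := by
    intro x hx
    simp only [Finset.mem_image, Finset.mem_univ, true_and] at hx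
    obtain ⟨i, rfl⟩ := hx
    by_cases hij : i = j
    · simpa [h, hij, hfj, hg] using hv
    · simp only [h, if_neg hij, one_smul]; exact (e.symm i).2
  have hmem : Finset.image (fun i => h i • f i) Finset.univ ∈ X.simplices :=
    X.down_closed s hs _ hsub ⟨h 0 • f 0, Finset.mem_image_of_mem _ (Finset.mem_univ 0)⟩
  obtain ⟨g', -, hg'⟩ := hreg ⊤ d f h (fun _ => trivial) (hf ▸ hs) hmem
  let k : Fin (d + 1) := e ⟨v, hv⟩
  have hfk : f k = v := by simp [f, k]
  have hkj : k ≠ j := by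
    intro hkj
    apply hne
    have := congrArg (fun i => (e.symm i : V)) hkj
    simpa [k, j, f] using this
  have h1 : g' • v = v := by
    have := hg' k
    simpa [h, hkj, hfk] using this
  have h2 : g' • w = v := by
    have := hg' j
    simpa [h, hfj, hg] using this
  exact hne (smul_left_cancel g' (h1.trans h2.symm))

/-- Subsets of a simplex of a regular complex are determined by their images. -/
lemma eq_of_image_eq {G V : Type*} [Group G] [MulAction G V] [DecidableEq V]
    [DecidableEq (Quotient (MulAction.orbitRel G V))]
    (X : GComplex G V) (hreg : X.Regular) {s A B : Finset V} (hs : s ∈ X.simplices)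
    (hA : A ⊆ s) (hB : B ⊆ s)
    (h : A.image (Quotient.mk (MulAction.orbitRel G V))
       = B.image (Quotient.mk (MulAction.orbitRel G V))) : A = B := by
  ext x
  constructor <;> intro hx
  · have hx' : Quotient.mk (MulAction.orbitRel G V) x
        ∈ B.image (Quotient.mk (MulAction.orbitRel G V)) :=
      h ▸ Finset.mem_image_of_mem _ hx
    obtain ⟨y, hy, hyx⟩ := Finset.mem_image.1 hx'
    exact (quot_inj_on_simplex X hreg hs (hB hy) (hA hx) hyx) ▸ hy
  · have hx' : Quotient.mk (MulAction.orbitRel G V) x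
        ∈ A.image (Quotient.mk (MulAction.orbitRel G V)) :=
      h.symm ▸ Finset.mem_image_of_mem _ hx
    obtain ⟨y, hy, hyx⟩ := Finset.mem_image.1 hx'
    exact (quot_inj_on_simplex X hreg hs (hA hy) (hB hx) hyx) ▸ hy

lemma image_smul_quot {G V : Type*} [Group G] [MulAction G V] [DecidableEq V]
    [DecidableEq (Quotient (MulAction.orbitRel G V))]
    (g : G) (t : Finset V) :
    (g • t).image (Quotient.mk (MulAction.orbitRel G V))
      = t.image (Quotient.mk (MulAction.orbitRel G V)) := by
  rw [Finset.smul_finset_def, Finset.image_image]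
  apply Finset.image_congr
  intro x _
  exact Quotient.sound ⟨g, rfl⟩

/-- If `ω' ⊆ ψ'` in the quotient and `ω` is the unique face of `ℓ(ψ')` over `ω'`, then
`{g : g • ℓ(ω') = ω} = {g : g • ℓ(ω') ⊆ ℓ(ψ')}`; and if `ω' ⊄ ψ'` then the latter set
is empty. -/
theorem stmt_8 {G V : Type*} [Group G] [MulAction G V] [DecidableEq V]
    [DecidableEq (Quotient (MulAction.orbitRel G V))]
    (X : GComplex G V) (hreg : X.Regular)
    (ℓ : Finset (Quotient (MulAction.orbitRel G V)) → Finset V)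
    (hℓ : ∀ t ∈ X.simplices.image (fun s => s.image (Quotient.mk (MulAction.orbitRel G V))),
      ℓ t ∈ X.simplices ∧ (ℓ t).image (Quotient.mk (MulAction.orbitRel G V)) = t)
    (ψ' ω' : Finset (Quotient (MulAction.orbitRel G V)))
    (hψ' : ψ' ∈ X.simplices.image (fun s => s.image (Quotient.mk (MulAction.orbitRel G V))))
    (hω' : ω' ∈ X.simplices.image (fun s => s.image (Quotient.mk (MulAction.orbitRel G V)))) :
    (ω' ⊆ ψ' → ∀ ω : Finset V, ω ⊆ ℓ ψ' →
      ω.image (Quotient.mk (MulAction.orbitRel G V)) = ω' →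
      {g : G | g • ℓ ω' = ω} = {g : G | g • ℓ ω' ⊆ ℓ ψ'}) ∧
    (¬ ω' ⊆ ψ' → {g : G | g • ℓ ω' ⊆ ℓ ψ'} = ∅) := by
  obtain ⟨hψs, hψim⟩ := hℓ ψ' hψ'
  obtain ⟨hωs, hωim⟩ := hℓ ω' hω'
  have key : ∀ g : G, (g • ℓ ω').image (Quotient.mk (MulAction.orbitRel G V)) = ω' := fun g =>
    (image_smul_quot g (ℓ ω')).trans hωim
  constructor
  · intro _ ω hωψ hωq
    ext g
    simp only [Set.mem_setOf_eq]
    constructor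
    · intro hgeq; rw [hgeq]; exact hωψ
    · intro hgsub
      exact eq_of_image_eq X hreg hψs hgsub hωψ ((key g).trans hωq.symm)
  · intro hns
    ext g
    simp only [Set.mem_setOf_eq, Set.mem_empty_iff_false, iff_false]
    intro hgsub
    apply hns
    calc ω' = (g • ℓ ω').image (Quotient.mk (MulAction.orbitRel G V)) := (key g).symm
      _ ⊆ (ℓ ψ').image (Quotient.mk (MulAction.orbitRel G V)) := Finset.image_subset_image hgsub
      _ = ψ' := hψim
end
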